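/- arXiv:2203.06166 — 3 statements merged into one kernel-verified Lean document; each statement's English description precedes it below -/
import Mathlib

section
/- Let X and Y be T0 topological spaces with countable bases, let δ_X and δ_Y be admissible representations of X and Y respectively. Then a partial function f :⊆ X → Y is continuous (on its domain with the subspace topology) if and only if f is continuous with respect to the representations, i.e., there exists a partial function F :⊆ ℕ^ℕ → ℕ^ℕ, continuous on its domain, such that δ_Y(F(p)) = f(δ_X(p)) for all p ∈ dom(f∘δ_X). -/
/-! Kreitz–Weihrauch theorem: for admissibly represented countably based T₀ spaces,
a partial function is continuous iff it is continuous with respect to the representations. -/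

abbrev Baire : Type := ℕ → ℕ

/-- A representation of a set `X`: a partial surjection from Baire space onto `X`,
modelled as a total map together with a domain, surjective on that domain. -/
structure PartialRep (X : Type*) where
  dom : Set Baire
  map : Baire → X
  surj : ∀ x : X, ∃ p ∈ dom, map p = x

/-- A representation is continuous if it is continuous on its domain
(with the subspace topology). -/
def PartialRep.IsContinuous {X : Type*} [TopologicalSpace X] (δ : PartialRep X) : Prop :=
  ContinuousOn δ.map δ.dom

/-- `δ'` continuously translates into `δ`: there is a partial function `F` on Baire space,
continuous on its domain, with `δ(F(p)) = δ'(p)` for all `p ∈ dom(δ')`. -/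
def Translates {X : Type*} (δ' δ : PartialRep X) : Prop :=
  ∃ (Fd : Set Baire) (F : Baire → Baire), ContinuousOn F Fd ∧
    ∀ p ∈ δ'.dom, p ∈ Fd ∧ F p ∈ δ.dom ∧ δ.map (F p) = δ'.map p

/-- A representation of a topological space is admissible if it is continuous and
maximal among continuous representations w.r.t. continuous reducibility. -/
def PartialRep.IsAdmissible {X : Type*} [TopologicalSpace X] (δ : PartialRep X) : Prop :=
  δ.IsContinuous ∧ ∀ δ' : PartialRep X, δ'.IsContinuous → Translates δ' δ

/-!
For the forward direction, glue the continuous partial map `f ∘ δX` and `δY` itself into one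
continuous representation of `Y`, the two kinds of names told apart by their first digit;
translating it into the admissible `δY` and precomposing with `cons 0` realizes `f`.

For the converse, a countable basis `(B k)` of `X` yields the standard representation `ρ`, whose
names of `x` are the enumerations of `{k | x ∈ B k}`. It is continuous, so it translates into
`δX`, and composing that translation with a realizer of `f` makes `f ∘ ρ` continuous. Since
a finite prefix of a name of `x` only asserts membership in finitely many basic sets, it can be
completed to a name of any point of their intersection; so `ρ` maps neighbourhoods of names onto
neighbourhoods of points, and continuity of `f ∘ ρ` descends to `f`.
-/

open TopologicalSpace Set Filter Topology PiNat

theorem continuousOn_of_comp_of_image_mem_nhds {α X Y : Type*} [TopologicalSpace α]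
    [TopologicalSpace X] [TopologicalSpace Y] {ρ : α → X} {S : Set α} {D : Set X} {f : X → Y}
    (hsurj : D ⊆ ρ '' S) (hopen : ∀ p ∈ S, ∀ O ∈ 𝓝 p, ρ '' (O ∩ S) ∈ 𝓝 (ρ p))
    (hf : ContinuousOn (f ∘ ρ) (S ∩ ρ ⁻¹' D)) : ContinuousOn f D := by
  rintro _ hx V hV
  obtain ⟨p, hpS, rfl⟩ := hsurj hx
  obtain ⟨O, hO, hOV⟩ := mem_nhdsWithin_iff_exists_mem_nhds_inter.1 (hf p ⟨hpS, hx⟩ hV)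
  refine mem_nhdsWithin_iff_exists_mem_nhds_inter.2 ⟨_, hopen p hpS O hO, ?_⟩
  rintro _ ⟨⟨q, ⟨hqO, hqS⟩, rfl⟩, hqD⟩
  exact hOV ⟨hqO, hqS, hqD⟩

namespace TopologicalSpace.IsTopologicalBasis

variable {X ι : Type*} [TopologicalSpace X] {B : ι → Set X} (hB : IsTopologicalBasis (range B))
include hB

theorem exists_range_eq_setOf_mem [Countable ι] (x : X) :
    ∃ p : ℕ → ι, range p = {k | x ∈ B k} := by
  obtain ⟨_, ⟨k, rfl⟩, hxk, -⟩ := hB.exists_subset_of_mem_open (mem_univ x) isOpen_univ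
  obtain ⟨p, hp⟩ := (Set.to_countable {k | x ∈ B k}).exists_eq_range ⟨k, hxk⟩
  exact ⟨p, hp.symm⟩

theorem eq_of_setOf_mem_eq [T0Space X] {x y : X} (h : {k | x ∈ B k} = {k | y ∈ B k}) : x = y :=
  (hB.inseparable_iff.2 <| forall_mem_range.2 fun k => Set.ext_iff.1 h k).eq

end TopologicalSpace.IsTopologicalBasis

namespace Baire

def tail (p : Baire) : Baire := fun n => p (n + 1)

def cons (m : ℕ) (p : Baire) : Baire
  | 0 => m
  | n + 1 => p n

theorem continuous_tail : Continuous tail :=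
  continuous_pi fun i => continuous_apply (i + 1)

theorem continuous_cons (m : ℕ) : Continuous (cons m) :=
  continuous_pi fun
    | 0 => continuous_const
    | n + 1 => continuous_apply n

def splice (n : ℕ) (p r : Baire) : Baire := fun i => if i < n then p i else r (i - n)

theorem splice_mem_cylinder (n : ℕ) (p r : Baire) : splice n p r ∈ cylinder p n :=
  mem_cylinder_iff.2 fun _ hi => if_pos hi

theorem range_splice (n : ℕ) (p r : Baire) : range (splice n p r) = p '' Iio n ∪ range r := by
  ext k
  constructor
  · rintro ⟨i, rfl⟩
    by_cases hi : i < n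
    · exact .inl ⟨i, hi, (if_pos hi).symm⟩
    · exact .inr ⟨i - n, (if_neg hi).symm⟩
  · rintro (⟨i, hi, rfl⟩ | ⟨j, rfl⟩)
    · exact ⟨i, if_pos hi⟩
    · exact ⟨n + j, by simp [splice]⟩

end Baire

open Baire

namespace PartialRep

section Realizers

variable {X Y : Type*}

def Realizes (δX : PartialRep X) (δY : PartialRep Y) (D : Set X) (f : X → Y) (Fd : Set Baire)
    (F : Baire → Baire) : Prop :=
  ∀ p ∈ δX.dom, δX.map p ∈ D → p ∈ Fd ∧ F p ∈ δY.dom ∧ δY.map (F p) = f (δX.map p)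

variable {δ δ' : PartialRep X} {δY : PartialRep Y} {D : Set X} {f : X → Y} {Fd : Set Baire}
  {F : Baire → Baire}

theorem Realizes.continuousOn_comp [TopologicalSpace Y] (h : Realizes δ δY D f Fd F)
    (hF : ContinuousOn F Fd) (hδY : δY.IsContinuous) :
    ContinuousOn (f ∘ δ.map) (δ.dom ∩ δ.map ⁻¹' D) :=
  (hδY.comp (hF.mono fun p hp => (h p hp.1 hp.2).1) fun p hp => (h p hp.1 hp.2).2.1).congr
    fun p hp => (h p hp.1 hp.2).2.2.symm

theorem _root_.Translates.exists_realizes_comp (hδ : Translates δ' δ) (hF : ContinuousOn F Fd)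
    (h : Realizes δ δY D f Fd F) : ∃ Gd G, ContinuousOn G Gd ∧ Realizes δ' δY D f Gd G := by
  obtain ⟨Hd, H, hH, hHδ⟩ := hδ
  refine ⟨Hd ∩ H ⁻¹' Fd, F ∘ H, hF.comp (hH.mono inter_subset_left) fun p hp => hp.2,
    fun p hp hpD => ?_⟩
  obtain ⟨hpH, hHp, hHδ'⟩ := hHδ p hp
  rw [← hHδ'] at hpD ⊢
  obtain ⟨hHF, hFH, hFδ⟩ := h (H p) hHp hpD
  exact ⟨⟨hpH, hHF⟩, hFH, hFδ⟩

end Realizers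

section Glue

variable {Y : Type*} (δ : PartialRep Y) (S : Set Baire) (g : Baire → Y)

def glue : PartialRep Y where
  dom := {p | p 0 = 0 ∧ tail p ∈ S} ∪ {p | p 0 ≠ 0 ∧ tail p ∈ δ.dom}
  map p := if p 0 = 0 then g (tail p) else δ.map (tail p)
  surj y := by
    obtain ⟨q, hq, rfl⟩ := δ.surj y
    exact ⟨cons 1 q, Or.inr ⟨one_ne_zero, hq⟩, rfl⟩

variable {δ S g} [TopologicalSpace Y]

theorem isContinuous_glue (hδ : δ.IsContinuous) (hg : ContinuousOn g S) :
    (δ.glue S g).IsContinuous := by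
  have hclopen : IsClopen {p : Baire | p 0 = 0} :=
    (isClopen_discrete {0}).preimage (continuous_apply 0)
  have hclosed : IsClosed {p : Baire | ¬p 0 = 0} := hclopen.compl.isClosed
  refine ContinuousOn.if (fun p hp => by simp [hclopen.frontier_eq] at hp) ?_ ?_
  · rw [hclopen.isClosed.closure_eq]
    refine hg.comp continuous_tail.continuousOn ?_
    rintro p ⟨⟨-, hp⟩ | ⟨hp0, -⟩, hp0'⟩
    exacts [hp, absurd hp0' hp0]
  · rw [hclosed.closure_eq]
    refine hδ.comp continuous_tail.continuousOn ?_
    rintro p ⟨⟨hp0, -⟩ | ⟨-, hp⟩, hp0'⟩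
    exacts [absurd hp0 hp0', hp]

theorem IsAdmissible.exists_realizer (hδ : δ.IsAdmissible) (hg : ContinuousOn g S) :
    ∃ (Fd : Set Baire) (F : Baire → Baire), ContinuousOn F Fd ∧
      ∀ p ∈ S, p ∈ Fd ∧ F p ∈ δ.dom ∧ δ.map (F p) = g p := by
  obtain ⟨Fd, F, hF, hFδ⟩ := hδ.2 _ (isContinuous_glue hδ.1 hg)
  refine ⟨cons 0 ⁻¹' Fd, F ∘ cons 0,
    hF.comp (continuous_cons 0).continuousOn (mapsTo_preimage _ _), fun p hp => ?_⟩
  exact hFδ (cons 0 p) (Or.inl ⟨rfl, hp⟩)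

end Glue

section Standard

variable {X : Type*} [TopologicalSpace X] {B : ℕ → Set X}

noncomputable def standardMap [Nonempty X] (B : ℕ → Set X) (p : Baire) : X :=
  Classical.epsilon fun x => range p = {k | x ∈ B k}

variable [T0Space X] (hB : IsTopologicalBasis (range B))
include hB

theorem standardMap_eq [Nonempty X] {p : Baire} {x : X} (hp : range p = {k | x ∈ B k}) :
    standardMap B p = x :=
  hB.eq_of_setOf_mem_eq <|
    (Classical.epsilon_spec (p := fun y => range p = {k | y ∈ B k}) ⟨x, hp⟩).symm.trans hp

variable [Nonempty X]

noncomputable def standard : PartialRep X where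
  dom := {p | ∃ x, range p = {k | x ∈ B k}}
  map := standardMap B
  surj x :=
    let ⟨p, hp⟩ := hB.exists_range_eq_setOf_mem x
    ⟨p, ⟨x, hp⟩, standardMap_eq hB hp⟩

theorem isContinuous_standard : (standard hB).IsContinuous := by
  rintro p ⟨x, hpx⟩
  rw [ContinuousWithinAt, show (standard hB).map p = x from standardMap_eq hB hpx,
    hB.nhds_hasBasis.tendsto_right_iff]
  rintro _ ⟨⟨k, rfl⟩, hxk⟩
  obtain ⟨i, hi⟩ : k ∈ range p := hpx ▸ hxk
  have hpi : ∀ᶠ q in 𝓝 p, q i = p i :=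
    (continuous_apply i).continuousAt ((isOpen_discrete {p i}).mem_nhds rfl)
  filter_upwards [eventually_nhdsWithin_of_eventually_nhds hpi, self_mem_nhdsWithin]
    with q hqi ⟨y, hqy⟩
  rw [show (standard hB).map q = y from standardMap_eq hB hqy]
  exact (hqy ▸ ⟨i, hqi.trans hi⟩ : k ∈ {k | y ∈ B k})

theorem standard_map_image_mem_nhds {p : Baire} (hp : p ∈ (standard hB).dom) {O : Set Baire}
    (hO : O ∈ 𝓝 p) : (standard hB).map '' (O ∩ (standard hB).dom) ∈ 𝓝 ((standard hB).map p) := by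
  obtain ⟨x, hpx⟩ := hp
  obtain ⟨_, ⟨p', n, rfl⟩, hpp', hO⟩ := (isTopologicalBasis_cylinders _).mem_nhds_iff.1 hO
  rw [← mem_cylinder_iff_eq.1 hpp'] at hO
  rw [show (standard hB).map p = x from standardMap_eq hB hpx]
  have hW : IsOpen (⋂ i ∈ Iio n, B (p i)) :=
    (finite_Iio n).isOpen_biInter fun i _ => hB.isOpen (mem_range_self _)
  have hxW : x ∈ ⋂ i ∈ Iio n, B (p i) :=
    mem_iInter₂.2 fun i _ => (hpx ▸ mem_range_self i : p i ∈ {k | x ∈ B k})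
  refine mem_of_superset (hW.mem_nhds hxW) fun y hy => ?_
  obtain ⟨r, hr⟩ := hB.exists_range_eq_setOf_mem y
  have hname : range (splice n p r) = {k | y ∈ B k} := by
    rw [range_splice, hr, union_eq_right]
    rintro _ ⟨i, hi, rfl⟩
    exact mem_iInter₂.1 hy i hi
  exact ⟨splice n p r, ⟨hO (splice_mem_cylinder n p r), y, hname⟩, standardMap_eq hB hname⟩

end Standard

end PartialRep

open PartialRep

theorem kreitz_weihrauch_general {X Y : Type*} [TopologicalSpace X] [TopologicalSpace Y]
    [T0Space X]
    [SecondCountableTopology X]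
    (δX : PartialRep X) (δY : PartialRep Y)
    (hX : δX.IsAdmissible) (hY : δY.IsAdmissible)
    (D : Set X) (f : X → Y) :
    ContinuousOn f D ↔
      ∃ (Fd : Set Baire) (F : Baire → Baire), ContinuousOn F Fd ∧
        ∀ p ∈ δX.dom, δX.map p ∈ D →
          p ∈ Fd ∧ F p ∈ δY.dom ∧ δY.map (F p) = f (δX.map p) := by
  constructor
  · intro hf
    obtain ⟨Fd, F, hF, hFf⟩ :=
      hY.exists_realizer (hf.comp (hX.1.mono inter_subset_left) fun p hp => hp.2)
    exact ⟨Fd, F, hF, fun p hp hpD => hFf p ⟨hp, hpD⟩⟩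
  · rintro ⟨Fd, F, hF, hFf⟩
    cases isEmpty_or_nonempty X
    · simp [Set.eq_empty_of_isEmpty D]
    obtain ⟨B, hB⟩ := exists_seq_basis (α := X)
    obtain ⟨Gd, G, hG, hGf⟩ := (hX.2 _ (isContinuous_standard hB)).exists_realizes_comp hF hFf
    refine continuousOn_of_comp_of_image_mem_nhds (fun x _ => (standard hB).surj x)
      (fun p hp O hO => standard_map_image_mem_nhds hB hp hO) ?_
    exact hGf.continuousOn_comp hG hY.1

theorem kreitz_weihrauch {X Y : Type*} [TopologicalSpace X] [TopologicalSpace Y]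
    [T0Space X] [T0Space Y]
    [SecondCountableTopology X] [SecondCountableTopology Y]
    (δX : PartialRep X) (δY : PartialRep Y)
    (hX : δX.IsAdmissible) (hY : δY.IsAdmissible)
    (D : Set X) (f : X → Y) :
    ContinuousOn f D ↔
      ∃ (Fd : Set Baire) (F : Baire → Baire), ContinuousOn F Fd ∧
        ∀ p ∈ δX.dom, δX.map p ∈ D →
          p ∈ Fd ∧ F p ∈ δY.dom ∧ δY.map (F p) = f (δX.map p) :=
  kreitz_weihrauch_general δX δY hX hY D f
end

section
/- The problems EC, (ρ′→ρ), (ρ′→ρ_>), (ρ_<→ρ_>) and (ρ_<→ρ) are pairwise continuously Weihrauch equivalent: EC ≡_W (ρ′→ρ) ≡_W (ρ′→ρ_>) ≡_W (ρ_<→ρ_>) ≡_W (ρ_<→ρ). -/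
open Filter Topology

/-- The pairing `⟨p,q⟩(2n) = p(n)`, `⟨p,q⟩(2n+1) = q(n)`. -/
def pairB (p q : Baire) : Baire := fun n => if n % 2 = 0 then p (n / 2) else q (n / 2)

/-- A problem: a partial multivalued function on Baire space. -/
structure Problem where
  dom : Set Baire
  sol : Baire → Set Baire

/-- Continuous Weihrauch reducibility. -/
def WRed (f g : Problem) : Prop :=
  ∃ (Kd Hd : Set Baire) (K H : Baire → Baire),
    ContinuousOn K Kd ∧ ContinuousOn H Hd ∧
      ∀ p ∈ f.dom, p ∈ Kd ∧ K p ∈ g.dom ∧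
        ∀ q ∈ g.sol (K p), pairB p q ∈ Hd ∧ H (pairB p q) ∈ f.sol p

/-- Strong continuous Weihrauch reducibility. -/
def SWRed (f g : Problem) : Prop :=
  ∃ (Kd Hd : Set Baire) (K H : Baire → Baire),
    ContinuousOn K Kd ∧ ContinuousOn H Hd ∧
      ∀ p ∈ f.dom, p ∈ Kd ∧ K p ∈ g.dom ∧
        ∀ q ∈ g.sol (K p), q ∈ Hd ∧ H q ∈ f.sol p

def WEquiv (f g : Problem) : Prop := WRed f g ∧ WRed g f
def SWEquiv (f g : Problem) : Prop := SWRed f g ∧ SWRed g f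
def WLt (f g : Problem) : Prop := WRed f g ∧ ¬ WRed g f

/-- `range(p-1)`. -/
def rangeM (p : Baire) : Set ℕ := {n | ∃ i, p i = n + 1}

/-- Characteristic function of a set of naturals. -/
noncomputable def chi (A : Set ℕ) : Baire := A.indicator fun _ => 1

noncomputable def EC : Problem where
  dom := Set.univ
  sol := fun p => {chi (rangeM p)}

noncomputable def EC1 : Problem where
  dom := {p | ((rangeM p)ᶜ).encard ≤ 1}
  sol := fun p => {chi (rangeM p)}

def pfst (r : Baire) : Baire := fun n => r (2 * n)
def psnd (r : Baire) : Baire := fun n => r (2 * n + 1)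

noncomputable def SEP : Problem where
  dom := {r | rangeM (pfst r) ∩ rangeM (psnd r) = ∅}
  sol := fun r =>
    {s | ∃ A : Set ℕ, s = chi A ∧ rangeM (pfst r) ⊆ A ∧ A ⊆ (rangeM (psnd r))ᶜ}

noncomputable def SEP1 : Problem where
  dom := {r | rangeM (pfst r) ∩ rangeM (psnd r) = ∅ ∧
    ((rangeM (pfst r) ∪ rangeM (psnd r))ᶜ).encard ≤ 1}
  sol := SEP.sol

/- rationals -/
def ratEnum (i : ℕ) : ℚ :=
  ((i.unpair.1 : ℚ) - (i.unpair.2.unpair.1 : ℚ)) / ((i.unpair.2.unpair.2 : ℚ) + 1)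

def rhoCauchy (p : Baire) (x : ℝ) : Prop :=
  ∀ n, |(ratEnum (p n) : ℝ) - x| ≤ (2 : ℝ) ^ (-(n : ℤ))

def rhoNaive (p : Baire) (x : ℝ) : Prop :=
  Tendsto (fun n => ((ratEnum (p n) : ℝ))) atTop (nhds x)

def rhoLt (p : Baire) (x : ℝ) : Prop := rangeM p = {n | (ratEnum n : ℝ) < x}
def rhoGt (p : Baire) (x : ℝ) : Prop := rangeM p = {n | x < (ratEnum n : ℝ)}

def rhoCfLt (p : Baire) (x : ℝ) : Prop :=
  (∀ n, p n ≤ 1) ∧ ∀ n, (p n = 1 ↔ (ratEnum n : ℝ) < x)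
def rhoCfGt (p : Baire) (x : ℝ) : Prop :=
  (∀ n, p n ≤ 1) ∧ ∀ n, (p n = 1 ↔ x < (ratEnum n : ℝ))

noncomputable def cfTail : List ℕ → ℝ
  | [] => 0
  | b :: l => 1 / ((b : ℝ) + cfTail l)

noncomputable def cfApprox (p : Baire) (k : ℕ) : ℝ :=
  ((Denumerable.ofNat ℤ (p 0) : ℤ) : ℝ) + cfTail ((List.range k).map fun i => p (i + 1))

def rhoCf (p : Baire) (x : ℝ) : Prop :=
  ((∀ i, 1 ≤ i → 1 ≤ p i) ∧ Tendsto (cfApprox p) atTop (nhds x)) ∨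
    (∃ k, 1 ≤ k ∧ p k = 0 ∧ (∀ i, 1 ≤ i → i < k → 1 ≤ p i) ∧
      (2 ≤ k → 2 ≤ p (k - 1)) ∧ x = cfApprox p (k - 1))

def rhoDec (p : Baire) (x : ℝ) : Prop :=
  (∀ n, 1 ≤ n → p n ≤ 9) ∧
    x = ((Denumerable.ofNat ℤ (p 0) : ℤ) : ℝ) + ∑' n : ℕ, (p (n + 1) : ℝ) / 10 ^ (n + 1)

/-- The implication problem between two representations of ℝ. -/
def implProblem (d1 d2 : Baire → ℝ → Prop) : Problem where
  dom := {p | ∃ x, d1 p x}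
  sol := fun p => {q | ∃ x, d1 p x ∧ d2 q x}

/- trees / WKL / choice on Cantor space -/
def wordCode : List Bool → ℕ
  | [] => 0
  | b :: w => 2 * wordCode w + (if b then 2 else 1)

def prefixList (x : Baire) (k : ℕ) : List Bool := (List.range k).map fun i => decide (x i = 1)

def isTreeCode (t : Baire) : Prop :=
  (∀ n, t n ≤ 1) ∧
    ∀ w v : List Bool, w <+: v → t (wordCode v) = 1 → t (wordCode w) = 1

def WKL : Problem where
  dom := {t | isTreeCode t ∧ {w : List Bool | t (wordCode w) = 1}.Infinite}
  sol := fun t => {x | (∀ n, x n ≤ 1) ∧ ∀ k, t (wordCode (prefixList x k)) = 1}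

def Ap (p : Baire) : Set Baire :=
  {x | (∀ n, x n ≤ 1) ∧ ∀ k, wordCode (prefixList x k) ∉ rangeM p}

def CCantor : Problem where
  dom := {p | (Ap p).Nonempty}
  sol := Ap

def Cle2 : Problem where
  dom := {p | (Ap p).Nonempty ∧ (Ap p).encard ≤ 2}
  sol := Ap

/- limit and parallelization -/
def projCount (r : Baire) (n : ℕ) : Baire := fun k => r (Nat.pair n k)

def limP : Problem where
  dom := {r | ∃ q : Baire, ∀ k, Tendsto (fun n => projCount r n k) atTop (nhds (q k))}
  sol := fun r => {q | ∀ k, Tendsto (fun n => projCount r n k) atTop (nhds (q k))}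

def parallel (f : Problem) : Problem where
  dom := {r | ∀ n, projCount r n ∈ f.dom}
  sol := fun r => {s | ∀ n, projCount s n ∈ f.sol (projCount r n)}

def MCT : Problem where
  dom := {r | ∃ xs : ℕ → ℝ, (∀ n, rhoCauchy (projCount r n) (xs n)) ∧
    Monotone xs ∧ BddAbove (Set.range xs)}
  sol := fun r => {q | ∃ xs : ℕ → ℝ, (∀ n, rhoCauchy (projCount r n) (xs n)) ∧
    Monotone xs ∧ BddAbove (Set.range xs) ∧ rhoCauchy q (⨆ n, xs n)}

/- SORT and RAT -/
open Classical in
noncomputable def sortOut (p : Baire) : Baire := fun k =>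
  if {i | p i = 0}.Infinite then 0
  else if k < {i | p i = 0}.ncard then 0 else 1

noncomputable def SORT : Problem where
  dom := {p | ∀ n, p n ≤ 1}
  sol := fun p => {sortOut p}

def znk (n : ℕ) : Baire := fun k => if k < n then 0 else 1

def RAT : Problem where
  dom := {p | ∃ x, rhoCauchy p x}
  sol := fun p => {s | ∃ x, rhoCauchy p x ∧
    ((∃ n, x = (ratEnum n : ℝ) ∧ s = znk n) ∨
      ((∀ r : ℚ, x ≠ (r : ℝ)) ∧ s = fun _ => 0))}

/- omniscience principles -/
def projFin (m i : ℕ) (r : Baire) : Baire := fun k => r (m * k + i - 1)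
def isZeroSeq (p : Baire) : Prop := ∀ k, p k = 0
def constSeq (i : ℕ) : Baire := fun _ => i

noncomputable def LPOn (n : ℕ) : Problem where
  dom := Set.univ
  sol := fun r => {constSeq ({i | 1 ≤ i ∧ i ≤ n ∧ isZeroSeq (projFin n i r)}.ncard)}

def LLPOn (n : ℕ) : Problem where
  dom := {r | {i | 1 ≤ i ∧ i ≤ n ∧ ¬ isZeroSeq (projFin n i r)}.encard ≤ 1}
  sol := fun r => {s | ∃ i, 1 ≤ i ∧ i ≤ n ∧ isZeroSeq (projFin n i r) ∧ s = constSeq i}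

def MLPOn (n : ℕ) : Problem where
  dom := {r | ∃ i, 1 ≤ i ∧ i ≤ n ∧ isZeroSeq (projFin n i r)}
  sol := fun r => {s | ∃ i, 1 ≤ i ∧ i ≤ n ∧ isZeroSeq (projFin n i r) ∧ s = constSeq i}

def LPO : Problem where
  dom := Set.univ
  sol := fun p => {s | (isZeroSeq p ∧ s = constSeq 1) ∨ (¬ isZeroSeq p ∧ s = constSeq 0)}

/- choice problems on ℕ etc. -/
def Cfin (n : ℕ) : Problem where
  dom := {p | ∃ i, i < n ∧ i ∉ rangeM p}
  sol := fun p => {s | ∃ i, i < n ∧ i ∉ rangeM p ∧ s = constSeq i}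

def ACCfin (n : ℕ) : Problem where
  dom := {p | (∃ i, i < n ∧ i ∉ rangeM p) ∧ ({i | i < n} ∩ rangeM p).encard ≤ 1}
  sol := (Cfin n).sol

def CNat : Problem where
  dom := {p | ∃ i, i ∉ rangeM p}
  sol := fun p => {s | ∃ i, i ∉ rangeM p ∧ s = constSeq i}

/- differentiation -/
instance : Countable (AddMonoidAlgebra ℚ ℕ) :=
  Function.Injective.countable (f := AddMonoidAlgebra.coeff) (fun a b h => by cases a; cases b; cases h; rfl)

instance : Countable (Polynomial ℚ) :=
  Polynomial.toFinsupp_injective.countable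

noncomputable def polyEnum : ℕ → Polynomial ℚ :=
  (exists_surjective_nat (Polynomial ℚ)).choose

noncomputable def polyFun (k : ℕ) : C(Set.Icc (0:ℝ) 1, ℝ) :=
  ⟨fun x => ((polyEnum k).map (algebraMap ℚ ℝ)).eval (x : ℝ),
   (((polyEnum k).map (algebraMap ℚ ℝ)).continuous).comp continuous_subtype_val⟩

noncomputable def deltaC (p : Baire) (f : C(Set.Icc (0:ℝ) 1, ℝ)) : Prop :=
  ∀ n, ‖f - polyFun (p n)‖ ≤ (2 : ℝ) ^ (-(n : ℤ))

def IsDerivOn (f g : C(Set.Icc (0:ℝ) 1, ℝ)) : Prop :=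
  ∀ x : Set.Icc (0:ℝ) 1,
    HasDerivWithinAt (Set.IccExtend (by norm_num : (0:ℝ) ≤ 1) f) (g x) (Set.Icc 0 1) (x : ℝ)

noncomputable def diffP : Problem where
  dom := {p | ∃ f g, deltaC p f ∧ IsDerivOn f g}
  sol := fun p => {q | ∃ f g, deltaC p f ∧ IsDerivOn f g ∧ deltaC q g}

/-!
The five problems are shown equivalent along the cycle
`EC ≤ (ρ_<→ρ) ≤ (ρ_<→ρ_>) ≤ (ρ′→ρ_>) ≤ (ρ′→ρ) ≤ EC`.

A set `A ⊆ ℕ` is coded by the real `Σ_{i ∈ A} 4⁻⁽ⁱ⁺¹⁾`. An enumeration of `A` enumerates its left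
cut, and since the digits after position `n` contribute at most `1/3` to `4ⁿ⁺¹` times it, a
`1/4`-approximation already determines its `n`-th base-4 digit, which is `χ_A(n)`.

The three middle steps are translations of names: a left and a right cut give a Cauchy name by
searching for a close pair of enumerated rationals; a Cauchy name `q` gives the right cut
`{a | ∃ b, q_b + 2⁻ᵇ < a}`; a left cut gives a naive name by running maxima, and since a naive
name determines its value, an answer for the naive name is one for the left cut.

Finally, for a convergent sequence `p` the set of pairs `⟨n, s⟩` such that some later term differs
from `p s` by more than `2⁻ⁿ` is enumerable; `EC` decides it, and the least `s` outside it gives a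
`2⁻ⁿ`-approximation of the limit.
-/

lemma eventually_apply_eq (r : Baire) (i : ℕ) : ∀ᶠ r' in 𝓝 r, r' i = r i :=
  (continuous_apply i).continuousAt.eventually_mem ((isOpen_discrete {r i}).mem_nhds rfl)

lemma eventually_forall_lt_apply_eq (r : Baire) (M : ℕ) :
    ∀ᶠ r' in 𝓝 r, ∀ i < M, r' i = r i :=
  (Set.finite_lt_nat M).eventually_all.2 fun i _ => eventually_apply_eq r i

lemma continuousAt_of_eventually_apply_eq {X ι α : Type*} [TopologicalSpace X]
    [TopologicalSpace α] [DiscreteTopology α] {f : X → ι → α} {x : X}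
    (h : ∀ i, ∀ᶠ y in 𝓝 x, f y i = f x i) : ContinuousAt f x :=
  tendsto_pi_nhds.2 fun i => by rw [nhds_discrete α, tendsto_pure]; exact h i

lemma eventually_sInf_eq {X : Type*} [TopologicalSpace X] {P : X → ℕ → Prop} {x : X}
    (hx : ∃ m, P x m) (hP : ∀ m, ∀ᶠ y in 𝓝 x, (P y m ↔ P x m)) :
    ∀ᶠ y in 𝓝 x, sInf {m | P y m} = sInf {m | P x m} := by
  filter_upwards [(Set.finite_le_nat (sInf {m | P x m})).eventually_all.2 fun m _ => hP m]
    with y hy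
  have hPy : P y (sInf {m | P x m}) := (hy _ le_rfl).2 (Nat.sInf_mem hx)
  have hle : sInf {m | P y m} ≤ sInf {m | P x m} := Nat.sInf_le hPy
  exact hle.antisymm (Nat.sInf_le ((hy _ hle).1 (Nat.sInf_mem ⟨_, hPy⟩)))

@[simp] lemma pfst_pairB (p q : Baire) : pfst (pairB p q) = p := by
  funext n
  simp [pfst, pairB]

@[simp] lemma psnd_pairB (p q : Baire) : psnd (pairB p q) = q := by
  funext n
  simp [psnd, pairB, Nat.add_mod, Nat.add_div]

lemma continuous_pfst : Continuous pfst :=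
  continuous_pi fun _ => continuous_apply _

lemma continuous_psnd : Continuous psnd :=
  continuous_pi fun _ => continuous_apply _

lemma ContinuousOn.pairB {X : Type*} [TopologicalSpace X] {u v : X → Baire} {s : Set X}
    (hu : ContinuousOn u s) (hv : ContinuousOn v s) :
    ContinuousOn (fun x => pairB (u x) (v x)) s := by
  refine continuousOn_pi.2 fun n => ?_
  by_cases h : n % 2 = 0
  · simp only [_root_.pairB, h, if_true]
    exact (continuous_apply (n / 2)).comp_continuousOn hu
  · simp only [_root_.pairB, h, if_false]
    exact (continuous_apply (n / 2)).comp_continuousOn hv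

namespace WRed

lemma trans {f g h : Problem} (hfg : WRed f g) (hgh : WRed g h) : WRed f h := by
  obtain ⟨Kd₁, Hd₁, K₁, H₁, hK₁, hH₁, hred₁⟩ := hfg
  obtain ⟨Kd₂, Hd₂, K₂, H₂, hK₂, hH₂, hred₂⟩ := hgh
  -- on input `r = ⟨p, q⟩` the inner reduction sees `⟨K₁ p, q⟩`, the outer one `⟨p, H₂ ⟨K₁ p, q⟩⟩`
  set inner : Baire → Baire := fun r => pairB (K₁ (pfst r)) (psnd r)
  set outer : Baire → Baire := fun r => pairB (pfst r) (H₂ (inner r))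
  have hinner : ContinuousOn inner (pfst ⁻¹' Kd₁) :=
    (hK₁.comp continuous_pfst.continuousOn fun _ h => h).pairB continuous_psnd.continuousOn
  have houter : ContinuousOn outer (pfst ⁻¹' Kd₁ ∩ inner ⁻¹' Hd₂) :=
    continuous_pfst.continuousOn.pairB
      (hH₂.comp (hinner.mono Set.inter_subset_left) fun _ h => h.2)
  refine ⟨Kd₁ ∩ K₁ ⁻¹' Kd₂, pfst ⁻¹' Kd₁ ∩ inner ⁻¹' Hd₂ ∩ outer ⁻¹' Hd₁, K₂ ∘ K₁, H₁ ∘ outer,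
    hK₂.comp (hK₁.mono Set.inter_subset_left) fun _ h => h.2,
    hH₁.comp (houter.mono Set.inter_subset_left) fun _ h => h.2, fun p hp => ?_⟩
  obtain ⟨hpK₁, hK₁p, hsol₁⟩ := hred₁ p hp
  obtain ⟨hK₁pK₂, hK₂p, hsol₂⟩ := hred₂ (K₁ p) hK₁p
  refine ⟨⟨hpK₁, hK₁pK₂⟩, hK₂p, fun q hq => ?_⟩
  obtain ⟨hHd₂, hsol₂q⟩ := hsol₂ q hq
  obtain ⟨hHd₁, hsol₁q⟩ := hsol₁ _ hsol₂q
  simp only [Set.mem_inter_iff, Set.mem_preimage, Function.comp_apply, inner, outer,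
    pfst_pairB, psnd_pairB]
  exact ⟨⟨⟨hpK₁, hHd₂⟩, hHd₁⟩, hsol₁q⟩

lemma implProblem_right {d₁ d₂ e : Baire → ℝ → Prop} {Hd : Set Baire} {H : Baire → Baire}
    (hH : ContinuousOn H Hd)
    (hde : ∀ p q x, d₁ p x → e q x → pairB p q ∈ Hd ∧ d₂ (H (pairB p q)) x) :
    WRed (implProblem d₁ d₂) (implProblem d₁ e) := by
  refine ⟨Set.univ, Hd, id, H, continuousOn_id, hH, fun p hp => ⟨trivial, hp, ?_⟩⟩
  rintro q ⟨x, hpx, hqx⟩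
  exact ⟨(hde p q x hpx hqx).1, x, hpx, (hde p q x hpx hqx).2⟩

lemma implProblem_left {d₁ d₂ e : Baire → ℝ → Prop} {K : Baire → Baire} (hK : Continuous K)
    (hde : ∀ p x, d₁ p x → e (K p) x) (he : ∀ p x y, e p x → e p y → x = y) :
    WRed (implProblem d₁ d₂) (implProblem e d₂) := by
  refine ⟨Set.univ, Set.univ, K, psnd, hK.continuousOn, continuous_psnd.continuousOn,
    fun p ⟨x, hpx⟩ => ⟨trivial, ⟨x, hde p x hpx⟩, ?_⟩⟩
  rintro q ⟨y, hKy, hqy⟩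
  obtain rfl := he _ _ _ hKy (hde p x hpx)
  exact ⟨trivial, y, hpx, by rwa [psnd_pairB]⟩

end WRed

def rangeStage (p : Baire) (s : ℕ) : Finset ℕ :=
  (Finset.range s).filter fun i => ∃ j < s, p j = i + 1

lemma mem_rangeStage {p : Baire} {s i : ℕ} :
    i ∈ rangeStage p s ↔ i < s ∧ ∃ j < s, p j = i + 1 := by
  simp [rangeStage]

lemma mem_rangeM_of_mem_rangeStage {p : Baire} {s i : ℕ} (h : i ∈ rangeStage p s) :
    i ∈ rangeM p :=
  let ⟨_, j, _, hj⟩ := mem_rangeStage.1 h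
  ⟨j, hj⟩

lemma rangeStage_mono (p : Baire) : Monotone (rangeStage p) := fun s t hst i hi => by
  obtain ⟨his, j, hjs, hj⟩ := mem_rangeStage.1 hi
  exact mem_rangeStage.2 ⟨his.trans_le hst, j, hjs.trans_le hst, hj⟩

lemma eventually_mem_rangeStage {p : Baire} {i : ℕ} (h : i ∈ rangeM p) :
    ∀ᶠ s in atTop, i ∈ rangeStage p s := by
  obtain ⟨j, hj⟩ := h
  exact eventually_atTop.2 ⟨max i j + 1, fun s hs =>
    mem_rangeStage.2 ⟨by omega, j, by omega, hj⟩⟩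

lemma eventually_rangeStage_eq (p : Baire) (s : ℕ) :
    ∀ᶠ p' in 𝓝 p, rangeStage p' s = rangeStage p s := by
  filter_upwards [eventually_forall_lt_apply_eq p s] with p' hp'
  ext i
  simp only [mem_rangeStage]
  exact and_congr_right fun _ => exists_congr fun j => and_congr_right fun hj => by rw [hp' j hj]

open Classical in
noncomputable def enumOf (c : ℕ → ℕ → Prop) : Baire := fun j =>
  if c j.unpair.1 j.unpair.2 then j.unpair.1 + 1 else 0

lemma rangeM_enumOf (c : ℕ → ℕ → Prop) : rangeM (enumOf c) = {a | ∃ b, c a b} := by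
  classical
  ext a
  constructor
  · rintro ⟨j, hj⟩
    by_cases h : c j.unpair.1 j.unpair.2
    · simp only [enumOf, h, if_true, Nat.add_right_cancel_iff] at hj
      exact ⟨_, hj ▸ h⟩
    · simp [enumOf, h] at hj
  · rintro ⟨b, hb⟩
    exact ⟨Nat.pair a b, by simp [enumOf, hb]⟩

open Classical in
lemma continuous_enumOf {X : Type*} [TopologicalSpace X] {c : X → ℕ → ℕ → Prop}
    (hc : ∀ x a b, ∀ᶠ y in 𝓝 x, (c y a b ↔ c x a b)) : Continuous fun x => enumOf (c x) :=
  continuous_iff_continuousAt.2 fun x => continuousAt_of_eventually_apply_eq fun j =>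
    (hc x j.unpair.1 j.unpair.2).mono fun _ hy => if_congr hy rfl rfl

lemma ratEnum_surjective : Function.Surjective ratEnum := by
  intro a
  refine ⟨Nat.pair a.num.toNat (Nat.pair (-a.num).toNat (a.den - 1)), ?_⟩
  have hnum : ((a.num.toNat : ℚ) - ((-a.num).toNat : ℚ)) = a.num := by
    exact_mod_cast Int.toNat_sub_toNat_neg a.num
  have hden : ((a.den - 1 : ℕ) : ℚ) + 1 = a.den := by
    rw [Nat.cast_sub a.pos, Nat.cast_one, sub_add_cancel]
  simp only [ratEnum, Nat.unpair_pair, hnum, hden, Rat.num_div_den]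

lemma exists_ratEnum_mem_Ioo {x y : ℝ} (hxy : x < y) : ∃ k, x < ratEnum k ∧ (ratEnum k : ℝ) < y :=
  let ⟨a, hxa, hay⟩ := exists_rat_btwn hxy
  let ⟨k, hk⟩ := ratEnum_surjective a
  ⟨k, hk ▸ hxa, hk ▸ hay⟩

lemma rhoLt.lt {p : Baire} {x : ℝ} (h : rhoLt p x) {k : ℕ} (hk : k ∈ rangeM p) :
    (ratEnum k : ℝ) < x := by
  rwa [h] at hk

lemma rhoGt.lt {p : Baire} {x : ℝ} (h : rhoGt p x) {k : ℕ} (hk : k ∈ rangeM p) :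
    x < ratEnum k := by
  rwa [h] at hk

lemma rhoLt.exists_mem {p : Baire} {x y : ℝ} (h : rhoLt p x) (hy : y < x) :
    ∃ k ∈ rangeM p, y < ratEnum k := by
  obtain ⟨k, hyk, hkx⟩ := exists_ratEnum_mem_Ioo hy
  exact ⟨k, h ▸ hkx, hyk⟩

lemma rhoGt.exists_mem {p : Baire} {x y : ℝ} (h : rhoGt p x) (hy : x < y) :
    ∃ k ∈ rangeM p, (ratEnum k : ℝ) < y := by
  obtain ⟨k, hxk, hky⟩ := exists_ratEnum_mem_Ioo hy
  exact ⟨k, h ▸ hxk, hky⟩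

lemma rhoLt.unique {p : Baire} {x y : ℝ} (hx : rhoLt p x) (hy : rhoLt p y) : x = y := by
  by_contra hne
  wlog hlt : x < y generalizing x y
  · exact this hy hx (Ne.symm hne) ((le_of_not_gt hlt).lt_of_ne (Ne.symm hne))
  obtain ⟨k, hk, hxk⟩ := hy.exists_mem hlt
  exact (hx.lt hk).not_gt hxk

lemma rhoNaive.unique {p : Baire} {x y : ℝ} (hx : rhoNaive p x) (hy : rhoNaive p y) : x = y :=
  tendsto_nhds_unique hx hy

lemma rhoCauchy_iff {q : Baire} {x : ℝ} :
    rhoCauchy q x ↔ ∀ n, |(ratEnum (q n) : ℝ) - x| ≤ 2⁻¹ ^ n := by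
  simp [rhoCauchy]

/-- A rational `a` lies above `x` iff it exceeds some `q_b + 2⁻ᵇ`. -/
noncomputable def rightCutOfCauchy (q : Baire) : Baire :=
  enumOf fun a b => (ratEnum (q b) : ℝ) + 2⁻¹ ^ b < ratEnum a

lemma continuous_rightCutOfCauchy : Continuous rightCutOfCauchy :=
  continuous_enumOf fun q _ b => (eventually_apply_eq q b).mono fun _ h => by rw [h]

lemma rhoGt_rightCutOfCauchy {q : Baire} {x : ℝ} (hq : rhoCauchy q x) :
    rhoGt (rightCutOfCauchy q) x := by
  rw [rhoCauchy_iff] at hq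
  rw [rhoGt, rightCutOfCauchy, rangeM_enumOf]
  refine Set.ext fun a => ⟨fun ⟨b, hb⟩ => show x < (ratEnum a : ℝ) by
    linarith [(abs_le.1 (hq b)).1], fun (hxa : x < ratEnum a) => ?_⟩
  obtain ⟨b, hb⟩ := exists_pow_lt_of_lt_one (half_pos (sub_pos.2 hxa)) (by norm_num : (2:ℝ)⁻¹ < 1)
  exact ⟨b, by linarith [(abs_le.1 (hq b)).2]⟩

lemma wred_implProblem_rhoGt_rhoCauchy (d : Baire → ℝ → Prop) :
    WRed (implProblem d rhoGt) (implProblem d rhoCauchy) :=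
  WRed.implProblem_right (H := rightCutOfCauchy ∘ psnd) (Hd := Set.univ)
    (continuous_rightCutOfCauchy.comp continuous_psnd).continuousOn
    fun _ _ _ _ hq => ⟨trivial, by simpa using rhoGt_rightCutOfCauchy hq⟩

noncomputable def argmaxRat (F : Finset ℕ) : ℕ :=
  if h : F.Nonempty then (F.exists_max_image ratEnum h).choose else 0

lemma argmaxRat_spec {F : Finset ℕ} (h : F.Nonempty) :
    argmaxRat F ∈ F ∧ ∀ k ∈ F, ratEnum k ≤ ratEnum (argmaxRat F) := by
  rw [argmaxRat, dif_pos h]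
  exact (F.exists_max_image ratEnum h).choose_spec

noncomputable def naiveOfLeftCut (p : Baire) : Baire := fun s => argmaxRat (rangeStage p s)

lemma continuous_naiveOfLeftCut : Continuous naiveOfLeftCut :=
  continuous_iff_continuousAt.2 fun p => continuousAt_of_eventually_apply_eq fun s =>
    (eventually_rangeStage_eq p s).mono fun _ h => by rw [naiveOfLeftCut, naiveOfLeftCut, h]

lemma rhoNaive_naiveOfLeftCut {p : Baire} {x : ℝ} (hp : rhoLt p x) :
    rhoNaive (naiveOfLeftCut p) x := by
  have hmax {k : ℕ} (hk : k ∈ rangeM p) : ∀ᶠ s in atTop,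
      ratEnum k ≤ ratEnum (naiveOfLeftCut p s) ∧ (ratEnum (naiveOfLeftCut p s) : ℝ) < x := by
    filter_upwards [eventually_mem_rangeStage hk] with s hs
    obtain ⟨hmem, hle⟩ := argmaxRat_spec ⟨k, hs⟩
    exact ⟨hle k hs, hp.lt (mem_rangeM_of_mem_rangeStage hmem)⟩
  refine tendsto_order.2 ⟨fun y hy => ?_, fun y hy => ?_⟩
  · obtain ⟨k, hk, hyk⟩ := hp.exists_mem hy
    filter_upwards [hmax hk] with s hs
    exact hyk.trans_le (by exact_mod_cast hs.1)
  · obtain ⟨k, hk, -⟩ := hp.exists_mem (sub_one_lt x)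
    filter_upwards [hmax hk] with s hs
    exact hs.2.trans hy

lemma wred_implProblem_rhoLt_rhoNaive (d : Baire → ℝ → Prop) :
    WRed (implProblem rhoLt d) (implProblem rhoNaive d) :=
  WRed.implProblem_left continuous_naiveOfLeftCut (fun _ _ => rhoNaive_naiveOfLeftCut)
    fun _ _ _ => rhoNaive.unique

def IsCloseCutPair (p q : Baire) (n m : ℕ) : Prop :=
  ∃ k j, p m.unpair.1 = k + 1 ∧ q m.unpair.2 = j + 1 ∧ (ratEnum j : ℝ) - ratEnum k ≤ 2⁻¹ ^ n

noncomputable def cauchyOfCuts (r : Baire) : Baire := fun n =>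
  pfst r (sInf {m | IsCloseCutPair (pfst r) (psnd r) n m}).unpair.1 - 1

lemma continuousOn_cauchyOfCuts :
    ContinuousOn cauchyOfCuts {r | ∀ n, ∃ m, IsCloseCutPair (pfst r) (psnd r) n m} := by
  refine fun r hr => (continuousAt_of_eventually_apply_eq fun n => ?_).continuousWithinAt
  have hP (m : ℕ) : ∀ᶠ y in 𝓝 r,
      (IsCloseCutPair (pfst y) (psnd y) n m ↔ IsCloseCutPair (pfst r) (psnd r) n m) := by
    filter_upwards [eventually_apply_eq r (2 * m.unpair.1),
      eventually_apply_eq r (2 * m.unpair.2 + 1)] with y h₁ h₂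
    simp only [IsCloseCutPair, pfst, psnd, h₁, h₂]
  filter_upwards [eventually_sInf_eq (hr n) hP,
    eventually_apply_eq r (2 * (sInf {m | IsCloseCutPair (pfst r) (psnd r) n m}).unpair.1)]
    with y hm hy
  simp only [cauchyOfCuts, hm]
  exact congrArg (· - 1) hy

lemma exists_isCloseCutPair {p q : Baire} {x : ℝ} (hp : rhoLt p x) (hq : rhoGt q x) (n : ℕ) :
    ∃ m, IsCloseCutPair p q n m := by
  have hε : (0 : ℝ) < 2⁻¹ ^ n / 2 := by positivity
  obtain ⟨k, ⟨i₁, hi₁⟩, hk⟩ := hp.exists_mem (sub_lt_self x hε)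
  obtain ⟨j, ⟨i₂, hi₂⟩, hj⟩ := hq.exists_mem (lt_add_of_pos_right x hε)
  exact ⟨Nat.pair i₁ i₂, k, j, by simpa using hi₁, by simpa using hi₂, by linarith⟩

lemma rhoCauchy_cauchyOfCuts {p q : Baire} {x : ℝ} (hp : rhoLt p x) (hq : rhoGt q x) :
    rhoCauchy (cauchyOfCuts (pairB p q)) x := by
  rw [rhoCauchy_iff]
  intro n
  obtain ⟨k, j, hk, hj, hkj⟩ : IsCloseCutPair p q n (sInf {m | IsCloseCutPair p q n m}) :=
    Nat.sInf_mem (exists_isCloseCutPair hp hq n)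
  have hkx : (ratEnum k : ℝ) < x := hp.lt ⟨_, hk⟩
  have hxj : x < ratEnum j := hq.lt ⟨_, hj⟩
  simp only [cauchyOfCuts, pfst_pairB, psnd_pairB, hk, Nat.add_sub_cancel]
  rw [abs_le]
  constructor <;> linarith

lemma wred_implProblem_rhoLt_rhoCauchy_rhoGt :
    WRed (implProblem rhoLt rhoCauchy) (implProblem rhoLt rhoGt) :=
  WRed.implProblem_right continuousOn_cauchyOfCuts fun _ _ _ hp hq =>
    ⟨by simpa using exists_isCloseCutPair hp hq, rhoCauchy_cauchyOfCuts hp hq⟩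

def IsStableAt (p : Baire) (n s : ℕ) : Prop :=
  ∀ t ≥ s, |(ratEnum (p t) : ℝ) - ratEnum (p s)| ≤ 2⁻¹ ^ n

noncomputable def unstableEnum (p : Baire) : Baire :=
  enumOf fun a t => a.unpair.2 ≤ t ∧
    2⁻¹ ^ a.unpair.1 < |(ratEnum (p t) : ℝ) - ratEnum (p a.unpair.2)|

lemma continuous_unstableEnum : Continuous unstableEnum :=
  continuous_enumOf fun p a t => by
    filter_upwards [eventually_apply_eq p t, eventually_apply_eq p a.unpair.2] with p' h₁ h₂
    rw [h₁, h₂]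

lemma chi_unstableEnum_eq_zero_iff {p : Baire} {n s : ℕ} :
    chi (rangeM (unstableEnum p)) (Nat.pair n s) = 0 ↔ IsStableAt p n s := by
  simp [chi, unstableEnum, rangeM_enumOf, IsStableAt]

lemma rhoNaive.exists_isStableAt {p : Baire} {x : ℝ} (hp : rhoNaive p x) (n : ℕ) :
    ∃ s, IsStableAt p n s := by
  obtain ⟨s, hs⟩ := Metric.tendsto_atTop.1 hp (2⁻¹ ^ n / 2) (by positivity)
  refine ⟨s, fun t ht => ?_⟩
  have h₁ := abs_sub_lt_iff.1 (hs t ht)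
  have h₂ := abs_sub_lt_iff.1 (hs s le_rfl)
  rw [abs_le]
  constructor <;> linarith [h₁.1, h₁.2, h₂.1, h₂.2]

lemma rhoNaive.abs_sub_le_of_isStableAt {p : Baire} {x : ℝ} (hp : rhoNaive p x) {n s : ℕ}
    (hs : IsStableAt p n s) : |(ratEnum (p s) : ℝ) - x| ≤ 2⁻¹ ^ n := by
  rw [abs_sub_comm]
  exact le_of_tendsto ((hp.sub_const _).abs) (eventually_atTop.2 ⟨s, hs⟩)

noncomputable def limitOfStable (r : Baire) : Baire := fun n =>
  pfst r (sInf {s | psnd r (Nat.pair n s) = 0})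

lemma continuousOn_limitOfStable :
    ContinuousOn limitOfStable {r | ∀ n, ∃ s, psnd r (Nat.pair n s) = 0} := by
  refine fun r hr => (continuousAt_of_eventually_apply_eq fun n => ?_).continuousWithinAt
  filter_upwards [eventually_sInf_eq (P := fun y s => psnd y (Nat.pair n s) = 0) (hr n) fun s =>
      (eventually_apply_eq r (2 * Nat.pair n s + 1)).mono fun _ h => (congrArg (· = 0) h).to_iff,
    eventually_apply_eq r (2 * sInf {s | psnd r (Nat.pair n s) = 0})] with y hm hy
  simp only [limitOfStable, hm]
  exact hy

lemma wred_implProblem_rhoNaive_rhoCauchy_EC : WRed (implProblem rhoNaive rhoCauchy) EC := by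
  refine ⟨Set.univ, {r | ∀ n, ∃ s, psnd r (Nat.pair n s) = 0}, unstableEnum, limitOfStable,
    continuous_unstableEnum.continuousOn, continuousOn_limitOfStable, ?_⟩
  rintro p ⟨x, hp⟩
  refine ⟨trivial, trivial, fun q hq => ?_⟩
  rw [EC, Set.mem_singleton_iff] at hq
  subst hq
  have hstable (n : ℕ) : IsStableAt p n (sInf {s | IsStableAt p n s}) :=
    Nat.sInf_mem (hp.exists_isStableAt n)
  have hlimit : limitOfStable (pairB p (chi (rangeM (unstableEnum p)))) =
      fun n => p (sInf {s | IsStableAt p n s}) := by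
    funext n
    simp only [limitOfStable, pfst_pairB, psnd_pairB, chi_unstableEnum_eq_zero_iff]
  refine ⟨fun n => ⟨_, by simpa [chi_unstableEnum_eq_zero_iff] using hstable n⟩, x, hp, ?_⟩
  rw [hlimit, rhoCauchy_iff]
  exact fun n => hp.abs_sub_le_of_isStableAt (hstable n)

noncomputable def cantorWeight (i : ℕ) : ℝ := 4⁻¹ ^ (i + 1)

noncomputable def cantorValue (A : Set ℕ) : ℝ := ∑' i, A.indicator cantorWeight i

lemma cantorWeight_nonneg (i : ℕ) : 0 ≤ cantorWeight i := by
  unfold cantorWeight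
  positivity

lemma hasSum_cantorWeight : HasSum cantorWeight 3⁻¹ := by
  have h := (hasSum_geometric_of_lt_one (by norm_num : (0:ℝ) ≤ 4⁻¹) (by norm_num)).mul_right 4⁻¹
  rw [show cantorWeight = fun i => 4⁻¹ ^ i * 4⁻¹ from funext fun i => pow_succ _ _]
  rwa [show (3⁻¹ : ℝ) = (1 - 4⁻¹)⁻¹ * 4⁻¹ by norm_num]

lemma summable_indicator_cantorWeight (A : Set ℕ) : Summable (A.indicator cantorWeight) :=
  hasSum_cantorWeight.summable.indicator A

lemma tendsto_sum_rangeStage_cantorWeight (p : Baire) :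
    Tendsto (fun s => ∑ i ∈ rangeStage p s, cantorWeight i) atTop
      (𝓝 (cantorValue (rangeM p))) := by
  have hsum (s : ℕ) : ∑ i ∈ rangeStage p s, cantorWeight i =
      ∑' i, (rangeStage p s : Set ℕ).indicator cantorWeight i :=
    sum_eq_tsum_indicator _ _
  simp only [hsum]
  refine tendsto_tsum_of_dominated_convergence hasSum_cantorWeight.summable (fun i => ?_)
    (Eventually.of_forall fun s i => ?_)
  · by_cases hi : i ∈ rangeM p
    · refine tendsto_const_nhds.congr' ?_
      filter_upwards [eventually_mem_rangeStage hi] with s hs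
      rw [Set.indicator_of_mem hi, Set.indicator_of_mem (Finset.mem_coe.2 hs)]
    · have (s : ℕ) : i ∉ rangeStage p s := fun hs => hi (mem_rangeM_of_mem_rangeStage hs)
      simp [this, hi]
  · rw [Real.norm_of_nonneg (Set.indicator_nonneg (fun i _ => cantorWeight_nonneg i) i)]
    exact Set.indicator_le_self' (fun i _ => cantorWeight_nonneg i) i

lemma sum_rangeStage_cantorWeight_le (p : Baire) (s : ℕ) :
    ∑ i ∈ rangeStage p s, cantorWeight i ≤ cantorValue (rangeM p) :=
  Monotone.ge_of_tendsto (fun _ _ hst => Finset.sum_le_sum_of_subset_of_nonneg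
    (rangeStage_mono p hst) fun i _ _ => cantorWeight_nonneg i)
    (tendsto_sum_rangeStage_cantorWeight p) s

noncomputable def leftCutOfEnum (p : Baire) : Baire :=
  enumOf fun a s => (ratEnum a : ℝ) < ∑ i ∈ rangeStage p s, cantorWeight i

lemma continuous_leftCutOfEnum : Continuous leftCutOfEnum :=
  continuous_enumOf fun p _ s => (eventually_rangeStage_eq p s).mono fun _ h => by rw [h]

lemma rhoLt_leftCutOfEnum (p : Baire) : rhoLt (leftCutOfEnum p) (cantorValue (rangeM p)) := by
  rw [rhoLt, leftCutOfEnum, rangeM_enumOf]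
  ext a
  exact ⟨fun ⟨s, hs⟩ => hs.trans_le (sum_rangeStage_cantorWeight_le p s),
    fun ha => ((tendsto_order.1 (tendsto_sum_rangeStage_cantorWeight p)).1 _ ha).exists⟩

open Classical in
/-- The integer part of `4ⁿ⁺¹ · cantorValue A`: the base-4 numeral with digits `χ_A(0) … χ_A(n)`. -/
noncomputable def cantorHead (A : Set ℕ) (n : ℕ) : ℕ :=
  ∑ i ∈ Finset.range (n + 1), if i ∈ A then 4 ^ (n - i) else 0

lemma cantorHead_mod_two (A : Set ℕ) (n : ℕ) : cantorHead A n % 2 = chi A n := by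
  classical
  have heven : 2 ∣ ∑ i ∈ Finset.range n, if i ∈ A then 4 ^ (n - i) else 0 :=
    Finset.dvd_sum fun i hi => by
      split_ifs
      · exact (by norm_num : 2 ∣ 4).trans
          (dvd_pow_self 4 (Nat.sub_ne_zero_of_lt (Finset.mem_range.1 hi)))
      · exact dvd_zero 2
  obtain ⟨c, hc⟩ := heven
  rw [cantorHead, Finset.sum_range_succ, hc, Nat.sub_self, pow_zero, chi, Set.indicator_apply]
  split_ifs <;> omega

lemma pow_mul_cantorWeight_add (m i : ℕ) : (4 : ℝ) ^ m * cantorWeight (i + m) = cantorWeight i := by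
  rw [cantorWeight, cantorWeight, add_right_comm, pow_add, mul_left_comm, ← mul_pow]
  norm_num

lemma pow_mul_cantorWeight_of_le {n i : ℕ} (h : i ≤ n) :
    (4 : ℝ) ^ (n + 1) * cantorWeight i = 4 ^ (n - i) := by
  rw [cantorWeight, show n + 1 = (n - i) + (i + 1) by omega, pow_add, mul_assoc, ← mul_pow]
  norm_num

lemma cantorValue_bounds (A : Set ℕ) (n : ℕ) :
    (cantorHead A n : ℝ) ≤ 4 ^ (n + 1) * cantorValue A ∧
      4 ^ (n + 1) * cantorValue A ≤ cantorHead A n + 3⁻¹ := by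
  classical
  set f : ℕ → ℝ := fun i => 4 ^ (n + 1) * A.indicator cantorWeight i
  have hf : Summable f := (summable_indicator_cantorWeight A).mul_left _
  have hsplit : 4 ^ (n + 1) * cantorValue A =
      ∑ i ∈ Finset.range (n + 1), f i + ∑' i, f (i + (n + 1)) := by
    rw [cantorValue, ← tsum_mul_left, hf.sum_add_tsum_nat_add]
  have hhead : ∑ i ∈ Finset.range (n + 1), f i = cantorHead A n := by
    rw [cantorHead, Nat.cast_sum]
    refine Finset.sum_congr rfl fun i hi => ?_
    simp only [f, Set.indicator_apply]
    split_ifs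
    · push_cast
      exact pow_mul_cantorWeight_of_le (Nat.lt_succ_iff.1 (Finset.mem_range.1 hi))
    · simp
  have hterm (i : ℕ) : 0 ≤ A.indicator cantorWeight i :=
    Set.indicator_nonneg (fun i _ => cantorWeight_nonneg i) i
  have htail_nonneg : 0 ≤ ∑' i, f (i + (n + 1)) :=
    tsum_nonneg fun i => mul_nonneg (by positivity) (hterm _)
  have htail_le : ∑' i, f (i + (n + 1)) ≤ 3⁻¹ := by
    rw [← hasSum_cantorWeight.tsum_eq]
    refine Summable.tsum_le_tsum (fun i => ?_) ((summable_nat_add_iff _).2 hf)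
      hasSum_cantorWeight.summable
    rw [← pow_mul_cantorWeight_add (n + 1) i]
    exact mul_le_mul_of_nonneg_left
      (Set.indicator_le_self' (fun i _ => cantorWeight_nonneg i) _) (by positivity)
  rw [hsplit, hhead]
  constructor <;> linarith

lemma floor_eq_cantorHead {A : Set ℕ} {n : ℕ} {a : ℝ}
    (ha : |a - cantorValue A| ≤ 4⁻¹ ^ (n + 2)) :
    ⌊(4 : ℝ) ^ (n + 1) * a + 4⁻¹⌋ = cantorHead A n := by
  obtain ⟨hlo, hhi⟩ := cantorValue_bounds A n
  have herr : |4 ^ (n + 1) * a - 4 ^ (n + 1) * cantorValue A| ≤ 4⁻¹ := by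
    rw [← mul_sub, abs_mul, abs_of_pos (by positivity)]
    calc (4 : ℝ) ^ (n + 1) * |a - cantorValue A| ≤ 4 ^ (n + 1) * 4⁻¹ ^ (n + 2) :=
          mul_le_mul_of_nonneg_left ha (by positivity)
      _ = 4⁻¹ := by rw [pow_succ _ (n + 1), ← mul_assoc, ← mul_pow]; norm_num
  rw [Int.floor_eq_iff]
  push_cast
  constructor <;> linarith [(abs_le.1 herr).1, (abs_le.1 herr).2]

/-- The `(2n+4)`-th term of a Cauchy name is `4⁻⁽ⁿ⁺²⁾`-close, close enough to round
`4ⁿ⁺¹ · cantorValue A` down to `cantorHead A n`. -/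
noncomputable def digitsOfCauchy (q : Baire) : Baire := fun n =>
  (⌊(4 : ℝ) ^ (n + 1) * ratEnum (q (2 * n + 4)) + 4⁻¹⌋).toNat % 2

lemma continuous_digitsOfCauchy : Continuous digitsOfCauchy :=
  continuous_iff_continuousAt.2 fun q => continuousAt_of_eventually_apply_eq fun n =>
    (eventually_apply_eq q (2 * n + 4)).mono fun _ h => by rw [digitsOfCauchy, digitsOfCauchy, h]

lemma digitsOfCauchy_eq_chi {q : Baire} {A : Set ℕ} (hq : rhoCauchy q (cantorValue A)) :
    digitsOfCauchy q = chi A := by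
  funext n
  have ha : |(ratEnum (q (2 * n + 4)) : ℝ) - cantorValue A| ≤ 4⁻¹ ^ (n + 2) := by
    convert rhoCauchy_iff.1 hq (2 * n + 4) using 1
    rw [show 2 * n + 4 = 2 * (n + 2) by ring, pow_mul]
    norm_num
  rw [digitsOfCauchy, floor_eq_cantorHead ha, Int.toNat_natCast, cantorHead_mod_two]

lemma wred_EC_implProblem_rhoLt_rhoCauchy : WRed EC (implProblem rhoLt rhoCauchy) := by
  refine ⟨Set.univ, Set.univ, leftCutOfEnum, digitsOfCauchy ∘ psnd,
    continuous_leftCutOfEnum.continuousOn,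
    (continuous_digitsOfCauchy.comp continuous_psnd).continuousOn,
    fun p _ => ⟨trivial, ⟨_, rhoLt_leftCutOfEnum p⟩, ?_⟩⟩
  rintro q ⟨x, hx, hq⟩
  obtain rfl := hx.unique (rhoLt_leftCutOfEnum p)
  exact ⟨trivial, by simp [digitsOfCauchy_eq_chi hq, EC]⟩

/-- Weihrauch's Theorem 4: `EC ≡_W (ρ′→ρ) ≡_W (ρ′→ρ_>) ≡_W (ρ_<→ρ_>) ≡_W (ρ_<→ρ)`
(continuous Weihrauch equivalence). -/
theorem EC_equiv_translators :
    WEquiv EC (implProblem rhoNaive rhoCauchy) ∧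
    WEquiv (implProblem rhoNaive rhoCauchy) (implProblem rhoNaive rhoGt) ∧
    WEquiv (implProblem rhoNaive rhoGt) (implProblem rhoLt rhoGt) ∧
    WEquiv (implProblem rhoLt rhoGt) (implProblem rhoLt rhoCauchy) := by
  have h₁ := wred_EC_implProblem_rhoLt_rhoCauchy
  have h₂ := wred_implProblem_rhoLt_rhoCauchy_rhoGt
  have h₃ := wred_implProblem_rhoLt_rhoNaive rhoGt
  have h₄ := wred_implProblem_rhoGt_rhoCauchy rhoNaive
  have h₅ := wred_implProblem_rhoNaive_rhoCauchy_EC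
  exact ⟨⟨h₁.trans (h₂.trans (h₃.trans h₄)), h₅⟩,
    ⟨h₅.trans (h₁.trans (h₂.trans h₃)), h₄⟩,
    ⟨h₄.trans (h₅.trans (h₁.trans h₂)), h₃⟩,
    ⟨h₃.trans (h₄.trans (h₅.trans h₁)), h₂⟩⟩
end

section
/- For all n ≥ 1: LPO_n <_W LPO_{n+1}, i.e., LPO_n is continuously Weihrauch reducible to LPO_{n+1} but not conversely. -/
open Filter Topology

/-! If `LPO_{n+1} ≤_W LPO_n` via `K, H`, then on each fibre of the `LPO_n`-answer `r ↦ a r` the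
continuity of `H` makes the count `c r` of zero columns of `r` locally constant. Starting from
`0̂`, where `c = n + 1`, and destroying one zero column at a time far out in the sequence, every
step lowers `c` without leaving the current neighbourhood and therefore forces a new value of `a`;
this produces `n + 2` distinct answers of `LPO_n`, which only has `n + 1`. -/

open Function

theorem succ_le_encard_image_nhds {X α : Type*} [TopologicalSpace X] {a : X → α} {c : X → ℕ}
    (hfib : ∀ x, ∀ᶠ y in 𝓝 x, a y = a x → c y = c x)
    (hpred : ∀ x k, c x = k + 1 → ∃ᶠ y in 𝓝 x, c y = k) (x : X) {U : Set X} (hU : U ∈ 𝓝 x) :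
    (c x + 1 : ℕ∞) ≤ (a '' {y ∈ U | c y ≤ c x}).encard := by
  generalize hk : c x = k
  induction k generalizing x U with
  | zero =>
    simpa using ⟨x, mem_of_mem_nhds hU, hk⟩
  | succ k ih =>
    set V := {y ∈ U | a y = a x → c y = c x}
    have hV : interior V ∈ 𝓝 x := interior_mem_nhds.2 (inter_mem hU (hfib x))
    obtain ⟨y, hy, hyV⟩ := ((hpred x k hk).and_eventually hV).exists
    set T := a '' {z ∈ interior V | c z ≤ k}
    have hxT : a x ∉ T := by
      rintro ⟨z, ⟨hzV, hzk⟩, hz⟩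
      have := (interior_subset hzV).2 hz
      omega
    have hT : insert (a x) T ⊆ a '' {y ∈ U | c y ≤ k + 1} := by
      rintro _ (rfl | ⟨z, ⟨hzV, hzk⟩, rfl⟩)
      · exact ⟨x, ⟨mem_of_mem_nhds hU, hk.le⟩, rfl⟩
      · exact ⟨z, ⟨(interior_subset hzV).1, by omega⟩, rfl⟩
    calc ((k + 1 + 1 : ℕ) : ℕ∞) = (k + 1 : ℕ∞) + 1 := by push_cast; rfl
      _ ≤ T.encard + 1 := by gcongr; exact ih y (isOpen_interior.mem_nhds hyV) hy
      _ = (insert (a x) T).encard := (Set.encard_insert_of_notMem hxT).symm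
      _ ≤ _ := Set.encard_le_encard hT

theorem tendsto_update_nhds {α : Type*} [TopologicalSpace α] {m : ℕ → ℕ}
    (hm : Tendsto m atTop atTop) (r : ℕ → α) (v : α) :
    Tendsto (fun k => update r (m k) v) atTop (𝓝 r) :=
  tendsto_pi_nhds.2 fun j => tendsto_const_nhds.congr' <|
    (hm.eventually_ne_atTop j).mono fun _ hk => (update_of_ne hk.symm _ _).symm

theorem continuous_pairB_left (q : Baire) : Continuous fun p => pairB p q :=
  continuous_pi fun n => by
    unfold pairB
    split_ifs
    exacts [continuous_apply _, continuous_const]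

theorem eventually_apply_pairB_eq {H : Baire → Baire} {Hd : Set Baire} (hH : ContinuousOn H Hd)
    {p q : Baire} (hpq : pairB p q ∈ Hd) (k : ℕ) :
    ∀ᶠ p' in 𝓝 p, pairB p' q ∈ Hd → H (pairB p' q) k = H (pairB p q) k := by
  have hcont : ContinuousWithinAt (fun p' => H (pairB p' q) k) ((pairB · q) ⁻¹' Hd) p :=
    (continuous_apply k).continuousAt.comp_continuousWithinAt
      ((hH _ hpq).comp (f := (pairB · q)) (continuous_pairB_left q).continuousWithinAt
        fun _ h => h)
  exact eventually_nhdsWithin_iff.1 (hcont.eventually_mem ((isOpen_discrete {_}).mem_nhds rfl))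

def zeroCols (m : ℕ) (r : Baire) : Set ℕ := {i | 1 ≤ i ∧ i ≤ m ∧ isZeroSeq (projFin m i r)}

theorem LPOn_sol (m : ℕ) (r : Baire) : (LPOn m).sol r = {constSeq (zeroCols m r).ncard} := rfl

theorem zeroCols_subset_Icc (m : ℕ) (r : Baire) : zeroCols m r ⊆ Set.Icc 1 m :=
  fun _ hi => ⟨hi.1, hi.2.1⟩

theorem zeroCols_finite (m : ℕ) (r : Baire) : (zeroCols m r).Finite :=
  (Set.finite_Icc 1 m).subset (zeroCols_subset_Icc m r)

theorem ncard_zeroCols_le (m : ℕ) (r : Baire) : (zeroCols m r).ncard ≤ m := by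
  simpa using Set.ncard_le_ncard (zeroCols_subset_Icc m r)

theorem ncard_zeroCols_zero (m : ℕ) : (zeroCols m 0).ncard = m := by
  have : zeroCols m 0 = Set.Icc 1 m :=
    (zeroCols_subset_Icc m 0).antisymm fun i hi => ⟨hi.1, hi.2, fun _ => rfl⟩
  simp [this]

section Interleaving

variable {m i : ℕ}

theorem mul_add_sub_one_mod (k : ℕ) (h1 : 1 ≤ i) (h2 : i ≤ m) : (m * k + i - 1) % m = i - 1 := by
  rw [Nat.add_sub_assoc h1, Nat.mul_add_mod, Nat.mod_eq_of_lt (by omega)]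

theorem mul_add_sub_one_div (k : ℕ) (h1 : 1 ≤ i) (h2 : i ≤ m) : (m * k + i - 1) / m = k := by
  rw [Nat.add_sub_assoc h1, Nat.mul_add_div (by omega), Nat.div_eq_of_lt (by omega), add_zero]

theorem projFin_update_of_ne {j : ℕ} (hi1 : 1 ≤ i) (hi : i ≤ m) (hj1 : 1 ≤ j) (hj : j ≤ m)
    (hji : j ≠ i) (r : Baire) (k v : ℕ) :
    projFin m j (update r (m * k + i - 1) v) = projFin m j r := by
  funext l
  refine update_of_ne (fun h => hji ?_) _ _
  have := congrArg (· % m) h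
  simp only [mul_add_sub_one_mod _ hj1 hj, mul_add_sub_one_mod _ hi1 hi] at this
  omega

theorem zeroCols_update_of_mem {r : Baire} (hi : i ∈ zeroCols m r) (k : ℕ) :
    zeroCols m (update r (m * k + i - 1) 1) = zeroCols m r \ {i} := by
  obtain ⟨hi1, hi, -⟩ := hi
  ext j
  simp only [zeroCols, Set.mem_sdiff, Set.mem_ofPred_eq, Set.mem_singleton_iff]
  constructor
  · rintro ⟨hj1, hj, hz⟩
    have hji : j ≠ i := by
      rintro rfl
      simpa [projFin] using hz k
    rw [projFin_update_of_ne hi1 hi hj1 hj hji] at hz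
    exact ⟨⟨hj1, hj, hz⟩, hji⟩
  · rintro ⟨⟨hj1, hj, hz⟩, hji⟩
    rw [← projFin_update_of_ne hi1 hi hj1 hj hji r k 1] at hz
    exact ⟨hj1, hj, hz⟩

theorem frequently_ncard_zeroCols_eq {r : Baire} {k : ℕ} (hk : (zeroCols m r).ncard = k + 1) :
    ∃ᶠ r' in 𝓝 r, (zeroCols m r').ncard = k := by
  obtain ⟨i, hi⟩ := Set.nonempty_of_ncard_ne_zero (s := zeroCols m r) (by omega)
  obtain ⟨hi1, him, -⟩ := id hi
  have hpos : Tendsto (fun l => m * l + i - 1) atTop atTop :=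
    tendsto_atTop_mono (fun l => show l ≤ _ by
      have := Nat.le_mul_of_pos_left l (hi1.trans him); omega) tendsto_id
  refine (tendsto_update_nhds hpos r 1).frequently (Frequently.of_forall fun l => ?_)
  rw [zeroCols_update_of_mem hi, Set.ncard_sdiff_singleton_of_mem hi, hk, Nat.add_sub_cancel]

end Interleaving

-- Entry `j` of an `m`-fold tupling is entry `j / m` of its column number `j % m + 1`.
def appendZeroCol (n : ℕ) (r : Baire) : Baire := fun j =>
  if j % (n + 1) = n then 0 else r (n * (j / (n + 1)) + j % (n + 1))

section AppendZeroCol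

variable (n : ℕ) (r : Baire)

theorem continuous_appendZeroCol : Continuous (appendZeroCol n) :=
  continuous_pi fun j => by
    unfold appendZeroCol
    split_ifs
    exacts [continuous_const, continuous_apply _]

theorem projFin_appendZeroCol {i : ℕ} (hi1 : 1 ≤ i) (hi : i ≤ n) :
    projFin (n + 1) i (appendZeroCol n r) = projFin n i r := by
  funext k
  simp only [projFin, appendZeroCol, mul_add_sub_one_mod k hi1 (hi.trans n.le_succ),
    mul_add_sub_one_div k hi1 (hi.trans n.le_succ)]
  rw [if_neg (by omega), Nat.add_sub_assoc hi1]

theorem isZeroSeq_projFin_appendZeroCol_last :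
    isZeroSeq (projFin (n + 1) (n + 1) (appendZeroCol n r)) := fun k => by
  simp [projFin, appendZeroCol]

theorem zeroCols_appendZeroCol :
    zeroCols (n + 1) (appendZeroCol n r) = insert (n + 1) (zeroCols n r) := by
  ext i
  simp only [zeroCols, Set.mem_insert_iff, Set.mem_ofPred_eq]
  constructor
  · rintro ⟨hi1, hi, hz⟩
    rcases hi.eq_or_lt with rfl | hlt
    · exact .inl rfl
    · rw [projFin_appendZeroCol n r hi1 (by omega)] at hz
      exact .inr ⟨hi1, by omega, hz⟩
  · rintro (rfl | ⟨hi1, hi, hz⟩)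
    · exact ⟨by omega, le_rfl, isZeroSeq_projFin_appendZeroCol_last n r⟩
    · exact ⟨hi1, by omega, by rwa [projFin_appendZeroCol n r hi1 hi]⟩

theorem ncard_zeroCols_appendZeroCol :
    (zeroCols (n + 1) (appendZeroCol n r)).ncard = (zeroCols n r).ncard + 1 := by
  rw [zeroCols_appendZeroCol, Set.ncard_insert_of_notMem (fun h => by have := h.2.1; omega)
    (zeroCols_finite n r)]

end AppendZeroCol

theorem WRed_LPOn_succ (n : ℕ) : WRed (LPOn n) (LPOn (n + 1)) := by
  refine ⟨Set.univ, Set.univ, appendZeroCol n, fun s => constSeq (s 1 - 1),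
    (continuous_appendZeroCol n).continuousOn,
    ((continuous_of_discreteTopology (f := fun x => constSeq (x - 1))).comp
      (continuous_apply 1)).continuousOn,
    fun p _ => ⟨trivial, trivial, fun q hq => ⟨trivial, ?_⟩⟩⟩
  rw [LPOn_sol, Set.mem_singleton_iff] at hq
  simp [LPOn_sol, hq, pairB, constSeq, ncard_zeroCols_appendZeroCol]

theorem not_WRed_LPOn_succ (n : ℕ) : ¬ WRed (LPOn (n + 1)) (LPOn n) := by
  intro ⟨_, Hd, K, H, _, hH, hred⟩
  set a : Baire → ℕ := fun r => (zeroCols n (K r)).ncard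
  set c : Baire → ℕ := fun r => (zeroCols (n + 1) r).ncard
  have hanswer : ∀ r r', a r' = a r →
      pairB r' (constSeq (a r)) ∈ Hd ∧ H (pairB r' (constSeq (a r))) = constSeq (c r') :=
    fun r r' h => (hred r' trivial).2.2 _ (by rw [LPOn_sol, ← h]; rfl)
  have hfib : ∀ r, ∀ᶠ r' in 𝓝 r, a r' = a r → c r' = c r := fun r => by
    filter_upwards [eventually_apply_pairB_eq hH (hanswer r r rfl).1 0] with r' hr' h
    have h' := hanswer r r' h
    simpa [h'.2, (hanswer r r rfl).2, constSeq] using hr' h'.1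
  have hbound (S : Set Baire) : (a '' S).encard ≤ n + 1 := by
    calc _ ≤ (Finset.range (n + 1) : Set ℕ).encard := Set.encard_le_encard <| by
          rintro _ ⟨r, -, rfl⟩
          simpa using Nat.lt_succ_of_le (ncard_zeroCols_le n (K r))
      _ = n + 1 := by rw [Set.encard_coe_eq_coe_finsetCard, Finset.card_range]; rfl
  have hcount := succ_le_encard_image_nhds hfib (fun _ _ => frequently_ncard_zeroCols_eq) 0
    Filter.univ_mem
  have : ((n + 1 + 1 : ℕ) : ℕ∞) ≤ n + 1 := by
    simpa [c, ncard_zeroCols_zero] using hcount.trans (hbound _)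
  norm_cast at this
  omega

/-- For all `n ≥ 1`: `LPO_n <_W LPO_{n+1}`. -/
theorem LPOn_strict : ∀ n, 1 ≤ n → WLt (LPOn n) (LPOn (n + 1)) :=
  fun n _ => ⟨WRed_LPOn_succ n, not_WRed_LPOn_succ n⟩
end
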